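/- Averaging over residues: for any positive integer q, Σ_{a mod q, (a,q)=1} g(q,a) = g - Σ_{p | q} 1/p, where g = γ - Σ_p Σ_{ν ≥ 2} 1/(ν p^ν) is Mertens's constant. -/

import Mathlib

open Real MeasureTheory Filter Topology Set Finset
open scoped Classical

/-- `π(t;q,a)`, the number of primes `p ≤ t` with `p ≡ a [MOD q]`. -/
noncomputable def primePiMod (q a : ℕ) (t : ℝ) : ℝ :=
  (((Nat.floor t + 1).primesBelow).filter (fun p => p % q = a % q)).card

/-- The logarithmic integral `li(t) = ∫_2^t du / log u`. -/
noncomputable def li (t : ℝ) : ℝ := ∫ u in (2 : ℝ)..t, 1 / Real.log u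

/-- `E(t;q,a) = π(t;q,a) - φ(q)⁻¹ li(t)`. -/
noncomputable def EMod (q a : ℕ) (t : ℝ) : ℝ :=
  primePiMod q a t - li t / (q.totient : ℝ)

/-- The sum `Σ_{p, ν ≥ 2, p^ν ≡ a mod q} 1/(ν p^ν)`. -/
noncomputable def primePowerResidueSum (q a : ℕ) : ℝ :=
  ∑' p : Nat.Primes, ∑' ν : ℕ,
    if 2 ≤ ν ∧ (p : ℕ) ^ ν % q = a % q then ((ν : ℝ) * (p : ℕ) ^ ν)⁻¹ else 0

/-- `g(q,a) = φ(q)⁻¹ γ + log 𝓛 - Σ_{p, ν ≥ 2, p^ν ≡ a mod q} 1/(ν p^ν)`,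
where `𝓛 = 𝓛(q,a)` is the positive real number with
`𝓛^{φ(q)} = (φ(q)/q) ∏_{χ ≠ χ₀} L(1,χ)^{χ̄(a)}`. -/
noncomputable def mertensG (q a : ℕ) (ℒ : ℝ) : ℝ :=
  Real.eulerMascheroniConstant / (q.totient : ℝ) + Real.log ℒ -
    primePowerResidueSum q a

/-- The defining property of the constant `𝓛(q,a)`:
`𝓛(q,a)^{φ(q)} = (φ(q)/q) ∏_{χ ≠ χ₀} L(1,χ)^{χ̄(a)}`, `𝓛(q,a) > 0`. -/
def IsMertensL (q a : ℕ) [NeZero q] (ℒ : ℝ) : Prop :=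
  0 < ℒ ∧ (ℒ : ℂ) ^ (q.totient : ℕ) =
    ((q.totient : ℂ) / (q : ℂ)) *
      ∏ χ ∈ Finset.univ.filter (fun χ : DirichletCharacter ℂ q => χ ≠ 1),
        (DirichletCharacter.LFunction χ 1) ^ ((starRingEnd ℂ) (χ a))


/-- Mertens's constant `g = γ - Σ_p Σ_{ν ≥ 2} 1/(ν p^ν)`. -/
noncomputable def mertensConstant : ℝ :=
  Real.eulerMascheroniConstant -
    ∑' p : Nat.Primes, ∑' ν : ℕ, if 2 ≤ ν then ((ν : ℝ) * (p : ℕ) ^ ν)⁻¹ else 0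

/-!
Sum the three terms of `g(q,a)` separately over the `φ(q)` reduced residues `a`. The terms
`γ/φ(q)` add up to `γ`. By orthogonality, `Σ_a χ̄(a) = 0` for `χ ≠ χ₀`, so the product of the
`𝓛(q,a)^{φ(q)}` is `(φ(q)/q)^{φ(q)}`; hence
`Σ_a log 𝓛(q,a) = log (φ(q)/q) = Σ_{p ∣ q} log (1 - 1/p)`, and
`log (1 - 1/p) = -1/p - Σ_{ν ≥ 2} 1/(ν p^ν)`. A prime power `p^ν` lies in exactly one reduced
class when `p ∤ q` and in none when `p ∣ q`, so the prime-power sums add up to the full double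
sum of Mertens's constant minus its terms with `p ∣ q`, which cancel against the logarithms.
-/

lemma card_filter_coprime_Icc (q : ℕ) : #{a ∈ Icc 1 q | q.Coprime a} = q.totient := by
  rw [← Nat.filter_coprime_Ico_eq_totient q 1, add_comm, Finset.Ico_add_one_right_eq_Icc]

section Residues

variable {q : ℕ} [NeZero q] {M : Type*} [AddCommMonoid M]

lemma sum_range_natCast_eq_sum_zmod (f : ZMod q → M) : ∑ k ∈ range q, f k = ∑ z, f z :=
  sum_nbij' (↑) ZMod.val (fun _ _ => Finset.mem_univ _) (fun z _ => mem_range.2 z.val_lt)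
    (fun _ hk => ZMod.val_cast_of_lt (mem_range.1 hk)) (fun z _ => ZMod.natCast_zmod_val z)
    (fun _ _ => rfl)

lemma sum_Icc_natCast_eq_sum_zmod (f : ZMod q → M) : ∑ a ∈ Icc 1 q, f a = ∑ z, f z := by
  rw [← Finset.Ico_add_one_right_eq_Icc, sum_Ico_eq_sum_range, Nat.add_sub_cancel,
    ← Equiv.sum_comp (Equiv.addLeft (1 : ZMod q)) f, ← sum_range_natCast_eq_sum_zmod]
  simp

lemma sum_filter_coprime_Icc_eq_sum_zmod (f : ZMod q → M) (hf : ∀ z, ¬IsUnit z → f z = 0) :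
    ∑ a ∈ Icc 1 q with q.Coprime a, f a = ∑ z, f z := by
  rw [sum_filter_of_ne fun a _ ha => ?_, sum_Icc_natCast_eq_sum_zmod]
  exact ((ZMod.isUnit_iff_coprime a q).1 (not_imp_comm.1 (hf _) ha)).symm

lemma sum_filter_coprime_Icc_ite_mod_eq (m : ℕ) (c : M) :
    ∑ a ∈ Icc 1 q with q.Coprime a, (if m % q = a % q then c else 0) =
      if q.Coprime m then c else 0 := by
  have hzmod := sum_filter_coprime_Icc_eq_sum_zmod
    (fun z : ZMod q => if (m : ZMod q) = z then if IsUnit z then c else 0 else 0)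
    (fun z hz => by simp [hz])
  rw [sum_ite_eq, if_pos (Finset.mem_univ _)] at hzmod
  rw [if_congr ((ZMod.isUnit_iff_coprime m q).trans Nat.coprime_comm).symm rfl rfl, ← hzmod]
  refine sum_congr rfl fun a ha => ?_
  have hunit : IsUnit (a : ZMod q) := (ZMod.isUnit_iff_coprime a q).2 (mem_filter.1 ha).2.symm
  simp [ZMod.natCast_eq_natCast_iff', hunit]

lemma sum_filter_coprime_Icc_mulChar_eq_zero {R : Type*} [CommRing R] [IsDomain R]
    {χ : MulChar (ZMod q) R} (hχ : χ ≠ 1) : ∑ a ∈ Icc 1 q with q.Coprime a, χ a = 0 := by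
  rw [sum_filter_coprime_Icc_eq_sum_zmod (fun z => χ z) fun _ => χ.map_nonunit,
    MulChar.sum_eq_zero_of_ne_one hχ]

end Residues

noncomputable def primePowerTerm (x : ℝ) (ν : ℕ) : ℝ :=
  if 2 ≤ ν then ((ν : ℝ) * x ^ ν)⁻¹ else 0

noncomputable def primePowerTail (x : ℝ) : ℝ := ∑' ν, primePowerTerm x ν

lemma primePowerTerm_nonneg {x : ℝ} (hx : 0 ≤ x) (ν : ℕ) : 0 ≤ primePowerTerm x ν := by
  unfold primePowerTerm
  split_ifs <;> positivity

lemma ite_primePowerTerm_le {x : ℝ} (hx : 0 ≤ x) (P : Prop) [Decidable P] (ν : ℕ) :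
    (if P then primePowerTerm x ν else 0) ≤ primePowerTerm x ν := by
  split_ifs
  exacts [le_rfl, primePowerTerm_nonneg hx ν]

lemma hasSum_primePowerTerm {x : ℝ} (hx : 1 < x) :
    HasSum (primePowerTerm x) (-log (1 - x⁻¹) - x⁻¹) := by
  have hx' : |x⁻¹| < 1 := by
    rw [abs_inv, abs_of_pos (by linarith)]
    exact inv_lt_one_of_one_lt₀ hx
  rw [← hasSum_nat_add_iff' 2]
  convert (hasSum_nat_add_iff' 1).2 (Real.hasSum_pow_div_log_of_abs_lt_one hx') using 1
  · funext n
    simp only [primePowerTerm, le_add_iff_nonneg_left, zero_le, if_true]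
    rw [mul_inv, ← inv_pow, div_eq_inv_mul]
    push_cast
    ring
  · simp [sum_range_succ, primePowerTerm]

lemma summable_ite_primePowerTerm {x : ℝ} (hx : 1 < x) (P : ℕ → Prop) [DecidablePred P] :
    Summable fun ν => if P ν then primePowerTerm x ν else 0 :=
  (hasSum_primePowerTerm hx).summable.of_nonneg_of_le
    (fun ν => ite_nonneg (primePowerTerm_nonneg (by positivity) ν) le_rfl)
    fun ν => ite_primePowerTerm_le (by positivity) (P ν) ν

lemma tsum_ite_primePowerTerm_le {x : ℝ} (hx : 1 < x) (P : ℕ → Prop) [DecidablePred P] :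
    ∑' ν, (if P ν then primePowerTerm x ν else 0) ≤ primePowerTail x :=
  (summable_ite_primePowerTerm hx P).tsum_le_tsum
    (fun ν => ite_primePowerTerm_le (by positivity) (P ν) ν)
    (hasSum_primePowerTerm hx).summable

lemma log_one_sub_inv_eq {x : ℝ} (hx : 1 < x) :
    log (1 - x⁻¹) = -x⁻¹ - primePowerTail x := by
  rw [primePowerTail, (hasSum_primePowerTerm hx).tsum_eq]
  ring

lemma primePowerTail_le_two_mul_inv_sq {x : ℝ} (hx : 2 ≤ x) :
    primePowerTail x ≤ 2 * (x ^ 2)⁻¹ := by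
  have hx0 : 0 < x := by positivity
  have hinv : x⁻¹ ≤ 2⁻¹ := inv_anti₀ two_pos hx
  have habs : |x⁻¹| < 1 := by rw [abs_of_pos (inv_pos.2 hx0)]; linarith
  have htaylor := neg_le_of_abs_le (Real.abs_log_sub_add_sum_range_le habs 1)
  simp only [abs_of_pos (inv_pos.2 hx0), sum_range_one, zero_add, pow_one, Nat.cast_zero,
    div_one, one_add_one_eq_two] at htaylor
  have hbound : x⁻¹ ^ 2 / (1 - x⁻¹) ≤ 2 * (x ^ 2)⁻¹ := by
    rw [div_le_iff₀ (by linarith), inv_pow]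
    nlinarith [inv_pos.2 (pow_pos hx0 2)]
  rw [primePowerTail, (hasSum_primePowerTerm (by linarith)).tsum_eq]
  linarith

lemma summable_primePowerTail : Summable fun p : Nat.Primes => primePowerTail p :=
  ((Real.summable_nat_pow_inv.2 one_lt_two).comp_injective Subtype.val_injective |>.mul_left 2)
    |>.of_nonneg_of_le (fun p => tsum_nonneg (primePowerTerm_nonneg (by positivity)))
      fun p => primePowerTail_le_two_mul_inv_sq (by exact_mod_cast p.2.two_le)

lemma primePowerResidueSum_eq (q a : ℕ) :
    primePowerResidueSum q a = ∑' p : Nat.Primes, ∑' ν,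
      if (p : ℕ) ^ ν % q = a % q then primePowerTerm p ν else 0 := by
  simp only [primePowerResidueSum, primePowerTerm, and_comm (a := 2 ≤ _), ite_and]

lemma mertensConstant_eq :
    mertensConstant = eulerMascheroniConstant - ∑' p : Nat.Primes, primePowerTail p := rfl

lemma prod_cpow_eq_cpow_sum {ι : Type*} (s : Finset ι) {z : ℂ} (hz : z ≠ 0) (w : ι → ℂ) :
    ∏ i ∈ s, z ^ w i = z ^ ∑ i ∈ s, w i := by
  simp only [Complex.cpow_def_of_ne_zero hz, ← Complex.exp_sum, ← mul_sum]

section ResidueSums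

variable {q : ℕ} [NeZero q]

lemma hasSum_primes_ite_dvd {M : Type*} [AddCommMonoid M] [TopologicalSpace M] (f : ℕ → M) :
    HasSum (fun p : Nat.Primes => if (p : ℕ) ∣ q then f p else 0)
      (∑ p ∈ q.primeFactors, f p) := by
  -- stated on `{p // p.Prime}`, which `Nat.Primes` unfolds to, so that `Finset.subtype` applies
  have h : HasSum (fun p : {p // p.Prime} => if p.1 ∣ q then f p.1 else 0)
      (∑ p ∈ q.primeFactors.subtype Nat.Prime, if p.1 ∣ q then f p.1 else 0) :=
    hasSum_sum_of_ne_finset_zero fun p hp => if_neg fun hpq =>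
      hp (mem_subtype.2 (Nat.mem_primeFactors.2 ⟨p.2, hpq, NeZero.ne q⟩))
  rwa [sum_subtype_eq_sum_filter fun n => if n ∣ q then f n else 0,
    filter_true_of_mem fun p hp => Nat.prime_of_mem_primeFactors hp,
    sum_congr rfl fun p hp => if_pos (Nat.dvd_of_mem_primeFactors hp)] at h

lemma sum_filter_coprime_Icc_tsum_ite_pow_mod_eq (p : Nat.Primes) :
    ∑ a ∈ Icc 1 q with q.Coprime a,
      ∑' ν, (if (p : ℕ) ^ ν % q = a % q then primePowerTerm p ν else 0) =
      if (p : ℕ) ∣ q then 0 else primePowerTail p := by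
  have hp : (1 : ℝ) < p := by exact_mod_cast p.2.one_lt
  rw [← Summable.tsum_finsetSum fun a _ => summable_ite_primePowerTerm hp _]
  simp only [sum_filter_coprime_Icc_ite_mod_eq]
  split_ifs with hpq
  · refine (tsum_congr fun ν => ite_eq_right_iff.2 fun hcop => if_neg fun hν => ?_).trans
      tsum_zero
    exact (Nat.Prime.coprime_iff_not_dvd p.2).1
      ((hcop.coprime_dvd_right (dvd_pow_self _ (by omega))).symm) hpq
  · have hcop : q.Coprime p := ((Nat.Prime.coprime_iff_not_dvd p.2).2 hpq).symm
    exact tsum_congr fun ν => if_pos (hcop.pow_right ν)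

lemma sum_filter_coprime_Icc_primePowerResidueSum :
    ∑ a ∈ Icc 1 q with q.Coprime a, primePowerResidueSum q a =
      ∑' p : Nat.Primes, primePowerTail p - ∑ p ∈ q.primeFactors, primePowerTail p := by
  have hsummable (a : ℕ) : Summable fun p : Nat.Primes =>
      ∑' ν, if (p : ℕ) ^ ν % q = a % q then primePowerTerm p ν else 0 :=
    summable_primePowerTail.of_nonneg_of_le
      (fun p => tsum_nonneg fun ν => ite_nonneg (primePowerTerm_nonneg (by positivity) ν) le_rfl)
      (fun p => tsum_ite_primePowerTerm_le (by exact_mod_cast p.2.one_lt) _)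
  simp only [primePowerResidueSum_eq]
  rw [← Summable.tsum_finsetSum fun a _ => hsummable a]
  simp only [sum_filter_coprime_Icc_tsum_ite_pow_mod_eq]
  have hdvd := hasSum_primes_ite_dvd (q := q) fun n : ℕ => primePowerTail n
  rw [← hdvd.tsum_eq, ← summable_primePowerTail.tsum_sub hdvd.summable]
  exact tsum_congr fun p => by split_ifs <;> simp

lemma log_totient_div_eq_sum_primeFactors :
    log (q.totient / q) = ∑ p ∈ q.primeFactors, (-(p : ℝ)⁻¹ - primePowerTail p) := by
  have hone_lt {p : ℕ} (hp : p ∈ q.primeFactors) : (1 : ℝ) < p := by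
    exact_mod_cast (Nat.prime_of_mem_primeFactors hp).one_lt
  have hprod := congrArg ((↑) : ℚ → ℝ) (Nat.totient_eq_mul_prod_factors q)
  push_cast at hprod
  rw [hprod, mul_div_cancel_left₀ _ (NeZero.ne _),
    log_prod fun p hp => (sub_pos.2 (inv_lt_one_of_one_lt₀ (hone_lt hp))).ne']
  exact sum_congr rfl fun p hp => log_one_sub_inv_eq (hone_lt hp)

lemma prod_eq_totient_div_of_isMertensL {ℒ : ℕ → ℝ}
    (hℒ : ∀ a ∈ {a ∈ Finset.Icc 1 q | q.Coprime a}, IsMertensL q a (ℒ a)) :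
    ∏ a ∈ Icc 1 q with q.Coprime a, ℒ a = q.totient / q := by
  have hpos : 0 < ∏ a ∈ Icc 1 q with q.Coprime a, ℒ a := prod_pos fun a ha => (hℒ a ha).1
  have hpow : ((∏ a ∈ Icc 1 q with q.Coprime a, ℒ a : ℝ) : ℂ) ^ q.totient =
      ((q.totient / q : ℝ) : ℂ) ^ q.totient := by
    push_cast
    calc (∏ a ∈ Icc 1 q with q.Coprime a, (ℒ a : ℂ)) ^ q.totient
        = ∏ a ∈ Icc 1 q with q.Coprime a, ((q.totient : ℂ) / q *
            ∏ χ ∈ univ.filter (fun χ : DirichletCharacter ℂ q => χ ≠ 1),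
              χ.LFunction 1 ^ starRingEnd ℂ (χ a)) := by
          rw [← Finset.prod_pow]
          exact prod_congr rfl fun a ha => (hℒ a ha).2
      _ = ((q.totient : ℂ) / q) ^ q.totient *
            ∏ χ ∈ univ.filter (fun χ : DirichletCharacter ℂ q => χ ≠ 1),
              χ.LFunction 1 ^ ∑ a ∈ Icc 1 q with q.Coprime a, starRingEnd ℂ (χ a) := by
          rw [prod_mul_distrib, prod_const, card_filter_coprime_Icc, Finset.prod_comm]
          refine congrArg _ (prod_congr rfl fun χ hχ => prod_cpow_eq_cpow_sum _ ?_ _)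
          exact χ.LFunction_ne_zero_of_one_le_re (.inl (mem_filter.1 hχ).2) le_rfl
      _ = ((q.totient : ℂ) / q) ^ q.totient := by
          rw [prod_congr rfl fun χ hχ => by rw [← map_sum,
            sum_filter_coprime_Icc_mulChar_eq_zero (mem_filter.1 hχ).2, map_zero,
            Complex.cpow_zero], prod_const_one, mul_one]
  exact (pow_left_inj₀ hpos.le (by positivity) (NeZero.ne _)).1 (by exact_mod_cast hpow)

end ResidueSums

/-- For any positive integer `q`,
`Σ_{a mod q, (a,q)=1} g(q,a) = g - Σ_{p ∣ q} 1/p`, where `g` is Mertens's constant.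
Here `a` runs over the representatives `1 ≤ a ≤ q` of the invertible residue
classes mod `q`, and `𝓛 a = 𝓛(q,a)` is the constant from the definition of `g(q,a)`. -/
theorem sum_mertensG (q : ℕ) [NeZero q] (ℒ : ℕ → ℝ)
    (hℒ : ∀ a ∈ (Finset.Icc 1 q).filter (fun a => Nat.Coprime q a),
      IsMertensL q a (ℒ a)) :
    ∑ a ∈ (Finset.Icc 1 q).filter (fun a => Nat.Coprime q a), mertensG q a (ℒ a) =
      mertensConstant - ∑ p ∈ q.primeFactors, (1 : ℝ) / p := by
  have hlog : ∑ a ∈ Icc 1 q with q.Coprime a, log (ℒ a) =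
      ∑ p ∈ q.primeFactors, (-(p : ℝ)⁻¹ - primePowerTail p) := by
    rw [← log_prod fun a ha => (hℒ a ha).1.ne', prod_eq_totient_div_of_isMertensL hℒ,
      log_totient_div_eq_sum_primeFactors]
  simp only [mertensG, sum_sub_distrib, sum_add_distrib, sum_const, card_filter_coprime_Icc,
    nsmul_eq_mul, hlog, sum_filter_coprime_Icc_primePowerResidueSum, mertensConstant_eq, one_div,
    sum_neg_distrib]
  rw [mul_div_cancel₀ _ (Nat.cast_ne_zero.2 (NeZero.ne _))]
  ring
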